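/- For the d=1 base case of Lemma 1: θ(μ_1 - λ_1 + u) equals θ(u + (μ_1 - λ_1)), i.e. the deformed determinant identity holds trivially for d = 1; and for d = 2 it reads θ(μ_1-λ_1+u)·θ(μ_2-λ_2+u-ℏ)·θ(μ_1-λ_2+ℏ)·θ(μ_2-λ_1) - θ(μ_1-λ_2+u)·θ(μ_2-λ_1+u-ℏ)·θ(μ_1-λ_1+ℏ)·θ(μ_2-λ_2) = θ(u+μ_1+μ_2-λ_1-λ_2)·θ(u-ℏ)·θ(λ_2-λ_1)·θ(ℏ+μ_1-μ_2), for all μ_1,μ_2,λ_1,λ_2,u,ℏ ∈ ℂ. -/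

import Mathlib

/-- The Jacobi theta function `θ(u) = θ_{1/2,1}(u+1/2, τ)`. -/
noncomputable def jtheta (τ u : ℂ) : ℂ :=
  ∑' μ : ℤ, Complex.exp ((2 * ↑Real.pi * Complex.I) *
    (((μ : ℂ) + 1/2) * (u + 1/2) + ((μ : ℂ) + 1/2)^2 * τ / 2))

/-!
Splitting the double series of `θ(x + y) θ(x - y)` according to the parity of the sum of the two
summation indices factors it as a `2 × 2` determinant `B(x) A(y) - A(x) B(y)`, where `A` and `B`
are the odd and even theta series with modular parameter `2τ`. The `d = 2` identity is then the Plücker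
relation between the `2 × 2` minors of the `2 × 4` matrix with columns `(A, B)` at `X, Y, U, V`,
after the substitution that writes the twelve arguments as `X ± U, Y ± V, …`.
-/

open Complex

def intPairParityEquiv : (ℤ × ℤ) ⊕ (ℤ × ℤ) ≃ ℤ × ℤ where
  toFun := Sum.elim (fun p ↦ (p.1 + p.2, p.1 - p.2)) (fun p ↦ (p.1 + p.2, p.1 - p.2 - 1))
  invFun p :=
    if (p.1 + p.2) % 2 = 0 then .inl ((p.1 + p.2) / 2, (p.1 - p.2) / 2)
    else .inr ((p.1 + p.2 + 1) / 2, (p.1 - p.2 - 1) / 2)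
  left_inv := by
    rintro (⟨a, b⟩ | ⟨a, b⟩)
    · dsimp only [Sum.elim_inl]
      rw [if_pos (by omega)]
      congr 2 <;> omega
    · dsimp only [Sum.elim_inr]
      rw [if_neg (by omega)]
      congr 2 <;> omega
  right_inv := by
    rintro ⟨m, n⟩
    dsimp only
    split_ifs <;> simp only [Sum.elim_inl, Sum.elim_inr, Prod.mk.injEq] <;> omega

theorem Summable.tsum_int_prod_split_parity {E : Type*} [AddCommGroup E] [UniformSpace E]
    [IsUniformAddGroup E] [CompleteSpace E] [T2Space E] {f : ℤ × ℤ → E} (hf : Summable f) :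
    ∑' p, f p =
      ∑' p : ℤ × ℤ, f (p.1 + p.2, p.1 - p.2) + ∑' p : ℤ × ℤ, f (p.1 + p.2, p.1 - p.2 - 1) := by
  have hf' := intPairParityEquiv.summable_iff.mpr hf
  rw [← intPairParityEquiv.tsum_eq]
  exact Summable.tsum_sum (hf'.comp_injective Sum.inl_injective)
    (hf'.comp_injective Sum.inr_injective)

theorem mul_sub_mul_eq_of_mul_eq_det {G R : Type*} [AddCommGroup G] [CommRing R]
    {f a b : G → R} (hf : ∀ x y, f (x + y) * f (x - y) = b x * a y - a x * b y) (X Y U V : G) :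
    f (X + U) * f (Y + V) * f (Y - V) * f (X - U) - f (Y + U) * f (X + V) * f (X - V) * f (Y - U) =
      f (X + Y) * f (U + V) * f (X - Y) * f (U - V) := by
  linear_combination f (Y + V) * f (Y - V) * hf X U + (b X * a U - a X * b U) * hf Y V
    - f (X + V) * f (X - V) * hf Y U - (b Y * a U - a Y * b U) * hf X V
    - f (U + V) * f (U - V) * hf X Y - (b X * a Y - a X * b Y) * hf U V

theorem summable_norm_jacobiTheta₂_term {τ : ℂ} (hτ : 0 < τ.im) (z : ℂ) :
    Summable fun n : ℤ ↦ ‖jacobiTheta₂_term n z τ‖ :=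
  summable_norm_iff.mpr ((summable_jacobiTheta₂_term_iff z τ).mpr hτ)

noncomputable def jthetaTerm (τ u : ℂ) (m : ℤ) : ℂ :=
  Complex.exp ((2 * ↑Real.pi * Complex.I) *
    (((m : ℂ) + 1/2) * (u + 1/2) + ((m : ℂ) + 1/2)^2 * τ / 2))

theorem jtheta_eq_tsum (τ u : ℂ) : jtheta τ u = ∑' m : ℤ, jthetaTerm τ u m := rfl

theorem jthetaTerm_eq (τ u : ℂ) (m : ℤ) :
    jthetaTerm τ u m = exp (Real.pi * I * (u + 1/2) + Real.pi * I * τ / 4) *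
      jacobiTheta₂_term m (u + 1/2 + τ/2) τ := by
  rw [jthetaTerm, jacobiTheta₂_term, ← exp_add]
  ring_nf

theorem summable_norm_jthetaTerm {τ : ℂ} (hτ : 0 < τ.im) (u : ℂ) :
    Summable fun m : ℤ ↦ ‖jthetaTerm τ u m‖ := by
  simpa only [jthetaTerm_eq, norm_mul] using (summable_norm_jacobiTheta₂_term hτ _).mul_left _

theorem jthetaTerm_add_mul_jthetaTerm_sub (τ x y : ℂ) (a b : ℤ) :
    jthetaTerm τ (x + y) (a + b) * jthetaTerm τ (x - y) (a - b) =
      -(jthetaTerm (2 * τ) (2 * x - 1/2) a * jacobiTheta₂_term b (2 * y) (2 * τ)) := by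
  rw [jthetaTerm, jthetaTerm, jthetaTerm, jacobiTheta₂_term, ← exp_add, ← exp_add, ← neg_one_mul,
    ← exp_pi_mul_I, ← exp_add, exp_eq_exp_iff_exists_int]
  exact ⟨a, by push_cast; ring⟩

theorem jthetaTerm_add_mul_jthetaTerm_sub_sub_one (τ x y : ℂ) (a b : ℤ) :
    jthetaTerm τ (x + y) (a + b) * jthetaTerm τ (x - y) (a - b - 1) =
      jacobiTheta₂_term a (2 * x) (2 * τ) * jthetaTerm (2 * τ) (2 * y - 1/2) b := by
  rw [jthetaTerm, jthetaTerm, jthetaTerm, jacobiTheta₂_term, ← exp_add, ← exp_add,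
    exp_eq_exp_iff_exists_int]
  exact ⟨a, by push_cast; ring⟩

theorem jtheta_add_mul_jtheta_sub {τ : ℂ} (hτ : 0 < τ.im) (x y : ℂ) :
    jtheta τ (x + y) * jtheta τ (x - y) =
      jacobiTheta₂ (2 * x) (2 * τ) * jtheta (2 * τ) (2 * y - 1/2) -
        jtheta (2 * τ) (2 * x - 1/2) * jacobiTheta₂ (2 * y) (2 * τ) := by
  have h2τ : 0 < (2 * τ).im := by simpa using hτ
  rw [jtheta_eq_tsum, jtheta_eq_tsum,
    tsum_mul_tsum_of_summable_norm (summable_norm_jthetaTerm hτ _) (summable_norm_jthetaTerm hτ _),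
    (summable_mul_of_summable_norm (summable_norm_jthetaTerm hτ _)
      (summable_norm_jthetaTerm hτ _)).tsum_int_prod_split_parity]
  simp only [jthetaTerm_add_mul_jthetaTerm_sub, jthetaTerm_add_mul_jthetaTerm_sub_sub_one, tsum_neg]
  rw [jacobiTheta₂, jacobiTheta₂, jtheta_eq_tsum, jtheta_eq_tsum,
    tsum_mul_tsum_of_summable_norm (summable_norm_jthetaTerm h2τ _)
      (summable_norm_jacobiTheta₂_term h2τ _),
    tsum_mul_tsum_of_summable_norm (summable_norm_jacobiTheta₂_term h2τ _)
      (summable_norm_jthetaTerm h2τ _)]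
  ring

/-- The `d = 1` and `d = 2` cases of the deformed determinant identity (Lemma 1):
for `d = 1` it reads `θ(μ₁-l₁+u) = θ(u+(μ₁-l₁))`, and for `d = 2` it reads
`θ(μ₁-l₁+u)θ(μ₂-l₂+u-ℏ)θ(μ₁-l₂+ℏ)θ(μ₂-l₁) - θ(μ₁-l₂+u)θ(μ₂-l₁+u-ℏ)θ(μ₁-l₁+ℏ)θ(μ₂-l₂)
 = θ(u+μ₁+μ₂-l₁-l₂)θ(u-ℏ)θ(l₂-l₁)θ(ℏ+μ₁-μ₂)`. -/
theorem deformed_det_low_rank (τ : ℂ) (hτ : 0 < τ.im) :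
    (∀ μ₁ l₁ u : ℂ, jtheta τ (μ₁ - l₁ + u) = jtheta τ (u + (μ₁ - l₁))) ∧
    (∀ μ₁ μ₂ l₁ l₂ u hbar : ℂ,
      jtheta τ (μ₁ - l₁ + u) * jtheta τ (μ₂ - l₂ + u - hbar) *
          jtheta τ (μ₁ - l₂ + hbar) * jtheta τ (μ₂ - l₁) -
        jtheta τ (μ₁ - l₂ + u) * jtheta τ (μ₂ - l₁ + u - hbar) *
          jtheta τ (μ₁ - l₁ + hbar) * jtheta τ (μ₂ - l₂) =
      jtheta τ (u + μ₁ + μ₂ - l₁ - l₂) * jtheta τ (u - hbar) *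
        jtheta τ (l₂ - l₁) * jtheta τ (hbar + μ₁ - μ₂)) := by
  refine ⟨fun μ₁ l₁ u ↦ by rw [add_comm], fun μ₁ μ₂ l₁ l₂ u hbar ↦ ?_⟩
  have h := mul_sub_mul_eq_of_mul_eq_det (jtheta_add_mul_jtheta_sub hτ)
    ((μ₁ + μ₂ + u) / 2 - l₁) ((μ₁ + μ₂ + u) / 2 - l₂) ((μ₁ - μ₂ + u) / 2)
    ((μ₂ - μ₁ + u) / 2 - hbar)
  ring_nf at h ⊢
  exact h
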